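/- arXiv:2210.12159 — 2 statements merged into one kernel-verified Lean document; each statement's English description precedes it below -/
import Mathlib

section
/- For every positive integer n and every integer s, ∑_{k=1}^{n} C(2n-1, 2k-1) * L(6k+s) = 4^(n-1) * (L(4n+1+s) + L(2n+2+s)). -/
/-!
Only the recurrence matters: every real solution of `u (i + 2) = u (i + 1) + u i` is
`a φ^i + b ψ^i`, so it suffices to prove the identity for `x^i` with `x² = x + 1`. Then
`1 + x³ = 2x²` and `1 - x³ = -2x`, and subtracting the binomial expansions of `(1 ± x³)^(2n-1)`
isolates the odd-index terms, which after multiplying by `x³` form the left-hand side.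
-/

open Finset Real goldenRatio

theorem Finset.sum_range_two_mul {M : Type*} [AddCommMonoid M] (f : ℕ → M) (n : ℕ) :
    ∑ i ∈ range (2 * n), f i = ∑ j ∈ range n, (f (2 * j) + f (2 * j + 1)) := by
  induction n with
  | zero => simp
  | succ n ih => rw [Nat.mul_succ, sum_range_succ, sum_range_succ, ih, sum_range_succ, add_assoc]

theorem one_add_pow_sub_one_sub_pow_odd {R : Type*} [CommRing R] (y : R) (m : ℕ) :
    (1 + y) ^ (2 * m + 1) - (1 - y) ^ (2 * m + 1)
      = 2 * ∑ j ∈ range (m + 1), ((2 * m + 1).choose (2 * j + 1) : R) * y ^ (2 * j + 1) := by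
  rw [sub_eq_add_neg 1 y, add_comm 1, add_comm 1 (-y), add_pow, add_pow, ← sum_sub_distrib,
    show 2 * m + 1 + 1 = 2 * (m + 1) by ring, sum_range_two_mul, mul_sum]
  refine sum_congr rfl fun j _ => ?_
  rw [(even_two_mul j).neg_pow, (odd_two_mul_add_one j).neg_pow]
  ring

theorem exists_eq_mul_pow_add_mul_pow {K : Type*} [Field K] {p q x y : K} (hxy : x ≠ y)
    (hx : x ^ 2 = p * x + q) (hy : y ^ 2 = p * y + q) {u : ℕ → K}
    (hu : ∀ i, u (i + 2) = p * u (i + 1) + q * u i) :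
    ∃ a b : K, ∀ i, u i = a * x ^ i + b * y ^ i := by
  have hxy' : x - y ≠ 0 := sub_ne_zero.mpr hxy
  refine ⟨(u 1 - y * u 0) / (x - y), (x * u 0 - u 1) / (x - y), fun i => ?_⟩
  induction i using Nat.twoStepInduction with
  | zero => field_simp; ring
  | one => field_simp; ring
  | more i ih₀ ih₁ =>
    rw [hu, ih₀, ih₁]
    linear_combination (-(u 1 - y * u 0) / (x - y) * x ^ i) * hx
      - ((x * u 0 - u 1) / (x - y) * y ^ i) * hy

theorem sum_choose_mul_pow_six_mul_of_sq_eq_add_one {K : Type*} [Field K] [CharZero K] {x : K}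
    (hx : x ^ 2 = x + 1) (m : ℕ) :
    ∑ j ∈ range (m + 1), ((2 * m + 1).choose (2 * j + 1) : K) * x ^ (6 * j + 6)
      = 4 ^ m * (x ^ (4 * m + 5) + x ^ (2 * m + 4)) := by
  have hx3 : x ^ 3 = 2 * x + 1 := by linear_combination (x + 1) * hx
  have h := one_add_pow_sub_one_sub_pow_odd (x ^ 3) m
  rw [show 1 + x ^ 3 = 2 * x ^ 2 by linear_combination hx3 - 2 * hx,
    show 1 - x ^ 3 = -(2 * x) by linear_combination -hx3, (odd_two_mul_add_one m).neg_pow] at h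
  have hsum : ∑ j ∈ range (m + 1), ((2 * m + 1).choose (2 * j + 1) : K) * x ^ (6 * j + 6)
      = x ^ 3 * ∑ j ∈ range (m + 1),
          ((2 * m + 1).choose (2 * j + 1) : K) * (x ^ 3) ^ (2 * j + 1) := by
    rw [mul_sum]
    exact sum_congr rfl fun j _ => by ring
  apply mul_left_cancel₀ (two_ne_zero (α := K))
  rw [hsum, mul_left_comm, ← h, show (4 : K) ^ m = 2 ^ (2 * m) by rw [pow_mul]; norm_num]
  ring

theorem sum_choose_mul_six_mul_of_fib_rec {u : ℕ → ℝ} (hu : ∀ i, u (i + 2) = u (i + 1) + u i)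
    (m : ℕ) :
    ∑ j ∈ range (m + 1), ((2 * m + 1).choose (2 * j + 1) : ℝ) * u (6 * j + 6)
      = 4 ^ m * (u (4 * m + 5) + u (2 * m + 4)) := by
  obtain ⟨a, b, hab⟩ := exists_eq_mul_pow_add_mul_pow (p := 1) (q := 1) (u := u)
    (goldenConj_neg.trans goldenRatio_pos).ne' (by rw [goldenRatio_sq]; ring)
    (by rw [goldenConj_sq]; ring) (fun i => by rw [hu]; ring)
  calc ∑ j ∈ range (m + 1), ((2 * m + 1).choose (2 * j + 1) : ℝ) * u (6 * j + 6)
      = a * ∑ j ∈ range (m + 1), ((2 * m + 1).choose (2 * j + 1) : ℝ) * φ ^ (6 * j + 6)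
        + b * ∑ j ∈ range (m + 1), ((2 * m + 1).choose (2 * j + 1) : ℝ) * ψ ^ (6 * j + 6) := by
        simp only [hab, mul_sum, ← sum_add_distrib]
        exact sum_congr rfl fun j _ => by ring
    _ = 4 ^ m * (u (4 * m + 5) + u (2 * m + 4)) := by
        rw [sum_choose_mul_pow_six_mul_of_sq_eq_add_one goldenRatio_sq,
          sum_choose_mul_pow_six_mul_of_sq_eq_add_one goldenConj_sq, hab, hab]
        ring

theorem stmt13_general (L : ℤ → ℤ)
    (hL : ∀ j : ℤ, L j = L (j - 1) + L (j - 2)) (n : ℕ) (hn : 0 < n) (s : ℤ) :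
    ∑ k ∈ Finset.Icc 1 n, ((2 * n - 1).choose (2 * k - 1) : ℤ) * L (6 * (k : ℤ) + s)
      = 4 ^ (n - 1) * (L (4 * (n : ℤ) + 1 + s) + L (2 * (n : ℤ) + 2 + s)) := by
  obtain ⟨m, rfl⟩ := Nat.exists_eq_add_one_of_ne_zero hn.ne'
  have hrec (i : ℕ) : (L (↑(i + 2) + s) : ℝ) = L (↑(i + 1) + s) + L (↑i + s) := by
    rw [hL]; push_cast; ring_nf
  have key := sum_choose_mul_six_mul_of_fib_rec (u := fun i : ℕ => (L (i + s) : ℝ)) hrec m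
  rw [← Ico_add_one_right_eq_Icc, sum_Ico_eq_sum_range, add_tsub_cancel_right,
    add_tsub_cancel_right]
  refine Int.cast_injective (α := ℝ) ?_
  push_cast at key ⊢
  convert key using 2 with j
  · rw [show 2 * (m + 1) - 1 = 2 * m + 1 by omega, show 2 * (1 + j) - 1 = 2 * j + 1 by omega]
    ring_nf
  · ring_nf

theorem stmt13 (L : ℤ → ℤ) (hL0 : L 0 = 2) (hL1 : L 1 = 1)
    (hL : ∀ j : ℤ, L j = L (j - 1) + L (j - 2)) (n : ℕ) (hn : 0 < n) (s : ℤ) :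
    ∑ k ∈ Finset.Icc 1 n, ((2 * n - 1).choose (2 * k - 1) : ℤ) * L (6 * (k : ℤ) + s)
      = 4 ^ (n - 1) * (L (4 * (n : ℤ) + 1 + s) + L (2 * (n : ℤ) + 2 + s)) :=
  stmt13_general L hL n hn s
end

section
/- For every positive integer n and all integers r, s, j, 10 * ∑_{k=0}^{n} C(2n, 2k) * F(j(2k+r)) * F(j(2k+s)) = (L(j)^(2n) + 5^n * F(j)^(2n)) * L(j(2n+r+s)) - (-1)^(j*s) * 4^n * L(j(r-s)). -/
/-!
With `α = φ ^ j` and `β = ψ ^ j` Binet's formulas read `√5 F(j m) = α ^ m - β ^ m` and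
`L(j m) = α ^ m + β ^ m`, where `α β = (-1) ^ j`. Expanding the product in each summand gives
`α ^ (4k + r + s) + β ^ (4k + r + s) - (α β) ^ s L(j (r - s))`, and the three resulting sums
are even-index binomial sums `2 ∑ C(2n, 2k) x ^ (2k) = (x + 1) ^ (2n) + (x - 1) ^ (2n)` at
`x = α², β², 1`.
Finally `α ^ (2n) ((α + β) ^ (2n) + (α - β) ^ (2n)) = (α² + 1) ^ (2n) + (α² - 1) ^ (2n)` because
`α (α ± β) = α² ± α β` with `α β = ±1`.
-/

open Finset Real
open scoped goldenRatio

lemma Finset.sum_range_two_mul_add_one_of_odd {M : Type*} [AddCommMonoid M] (g : ℕ → M)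
    (hodd : ∀ m, Odd m → g m = 0) (n : ℕ) :
    ∑ m ∈ range (2 * n + 1), g m = ∑ k ∈ range (n + 1), g (2 * k) := by
  induction n with
  | zero => simp
  | succ n ih =>
    rw [show 2 * (n + 1) + 1 = 2 * n + 1 + 1 + 1 by ring, sum_range_succ, sum_range_succ, ih,
      hodd _ (odd_two_mul_add_one n), add_zero, sum_range_succ _ (n + 1)]
    rfl

lemma add_one_pow_two_mul_add_sub_one_pow_two_mul {R : Type*} [CommRing R] (x : R) (n : ℕ) :
    (x + 1) ^ (2 * n) + (x - 1) ^ (2 * n)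
      = 2 * ∑ k ∈ range (n + 1), ((2 * n).choose (2 * k) : R) * x ^ (2 * k) := by
  rw [add_pow, sub_pow, ← sum_add_distrib, mul_sum, sum_range_two_mul_add_one_of_odd]
  · refine sum_congr rfl fun k _ => ?_
    rw [pow_add, (even_two_mul k).neg_one_pow, (even_two_mul n).neg_one_pow, one_pow]
    ring
  · intro m hm
    rw [pow_add, hm.neg_one_pow, (even_two_mul n).neg_one_pow, one_pow]
    ring

lemma two_mul_sum_choose_two_mul {R : Type*} [CommRing R] {n : ℕ} (hn : 0 < n) :
    2 * ∑ k ∈ range (n + 1), ((2 * n).choose (2 * k) : R) = 4 ^ n := by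
  have h := add_one_pow_two_mul_add_sub_one_pow_two_mul (1 : R) n
  rw [sub_self, zero_pow (by omega), add_zero, one_add_one_eq_two, pow_mul,
    show (2 : R) ^ 2 = 4 by norm_num] at h
  simpa using h.symm

lemma two_mul_sum_choose_mul_sq_pow {R : Type*} [CommRing R] [NoZeroDivisors R] {α β : R}
    (hαβ : (α * β) ^ 2 = 1) (n : ℕ) :
    2 * ∑ k ∈ range (n + 1), ((2 * n).choose (2 * k) : R) * (α ^ 2) ^ (2 * k)
      = α ^ (2 * n) * ((α + β) ^ (2 * n) + (α - β) ^ (2 * n)) := by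
  rw [← add_one_pow_two_mul_add_sub_one_pow_two_mul, mul_add, ← mul_pow, ← mul_pow, mul_add,
    mul_sub, ← sq]
  rcases sq_eq_one_iff.mp hαβ with h | h <;> rw [h]
  rw [sub_neg_eq_add, ← sub_eq_add_neg, add_comm]

lemma zpow_sub_zpow_mul_zpow_sub_zpow {K : Type*} [Field K] {α β : K} (hα : α ≠ 0) (hβ : β ≠ 0)
    (a b : ℤ) :
    (α ^ a - β ^ a) * (α ^ b - β ^ b)
      = α ^ (a + b) + β ^ (a + b) - (α * β) ^ b * (α ^ (a - b) + β ^ (a - b)) := by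
  obtain ⟨c, rfl⟩ : ∃ c, a = c + b := ⟨a - b, by ring⟩
  simp only [zpow_add₀ hα, zpow_add₀ hβ, mul_zpow, add_sub_cancel_right]
  ring

theorem two_mul_sq_mul_sum_choose_mul_binet {K : Type*} [Field K] {α β d : K} {f l : ℤ → K}
    (hαβ : (α * β) ^ 2 = 1) (hf : ∀ m, d * f m = α ^ m - β ^ m) (hl : ∀ m, l m = α ^ m + β ^ m)
    {n : ℕ} (hn : 0 < n) (r s : ℤ) :
    2 * d ^ 2 * ∑ k ∈ range (n + 1),
        ((2 * n).choose (2 * k) : K) * f (2 * (k : ℤ) + r) * f (2 * (k : ℤ) + s)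
      = (l 1 ^ (2 * n) + (d ^ 2) ^ n * f 1 ^ (2 * n)) * l (2 * (n : ℤ) + r + s)
        - (α * β) ^ s * 4 ^ n * l (r - s) := by
  have hα : α ≠ 0 := by rintro rfl; simp at hαβ
  have hβ : β ≠ 0 := by rintro rfl; simp at hαβ
  have hpow (x : K) (hx : x ≠ 0) (m : ℕ) (t : ℤ) : x ^ (2 * (m : ℤ) + t) = (x ^ 2) ^ m * x ^ t := by
    rw [zpow_add₀ hx, zpow_mul, zpow_natCast, zpow_ofNat]
  have hterm (k : ℕ) : d ^ 2 * (f (2 * (k : ℤ) + r) * f (2 * (k : ℤ) + s))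
      = (α ^ 2) ^ (2 * k) * α ^ (r + s) + (β ^ 2) ^ (2 * k) * β ^ (r + s)
        - (α * β) ^ s * (α ^ (r - s) + β ^ (r - s)) := by
    have hsum : 2 * (k : ℤ) + r + (2 * k + s) = 2 * ((2 * k : ℕ) : ℤ) + (r + s) := by
      push_cast; ring
    rw [sq, mul_mul_mul_comm, hf, hf, zpow_sub_zpow_mul_zpow_sub_zpow hα hβ, hsum, hpow α hα,
      hpow β hβ, add_sub_add_left_eq_sub, hpow _ (mul_ne_zero hα hβ), ← pow_mul, hαβ, one_pow,
      one_mul]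
  have hlhs : 2 * d ^ 2 * ∑ k ∈ range (n + 1),
        ((2 * n).choose (2 * k) : K) * f (2 * (k : ℤ) + r) * f (2 * (k : ℤ) + s)
      = (2 * ∑ k ∈ range (n + 1), ((2 * n).choose (2 * k) : K) * (α ^ 2) ^ (2 * k)) * α ^ (r + s)
        + (2 * ∑ k ∈ range (n + 1), ((2 * n).choose (2 * k) : K) * (β ^ 2) ^ (2 * k)) * β ^ (r + s)
        - (2 * ∑ k ∈ range (n + 1), ((2 * n).choose (2 * k) : K))
          * ((α * β) ^ s * (α ^ (r - s) + β ^ (r - s))) := by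
    simp only [mul_sum, sum_mul, ← sum_add_distrib, ← sum_sub_distrib]
    refine sum_congr rfl fun k _ => ?_
    linear_combination 2 * ((2 * n).choose (2 * k) : K) * hterm k
  have hβα := two_mul_sum_choose_mul_sq_pow (α := β) (β := α) (by rwa [mul_comm]) n
  rw [add_comm β, ← neg_sub α, (even_two_mul n).neg_pow] at hβα
  have hd : (d ^ 2) ^ n * f 1 ^ (2 * n) = (α - β) ^ (2 * n) := by
    rw [← pow_mul, ← mul_pow, hf, zpow_one, zpow_one]
  rw [hlhs, two_mul_sum_choose_mul_sq_pow hαβ, hβα, two_mul_sum_choose_two_mul hn, hd, hl, hl, hl, add_assoc, hpow α hα, hpow β hβ, zpow_one,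
    zpow_one, ← pow_mul, ← pow_mul]
  ring

lemma neg_one_zpow_eq_pow_natAbs {K : Type*} [DivisionRing K] (t : ℤ) :
    (-1 : K) ^ t = (-1) ^ t.natAbs := by
  obtain ⟨m, rfl | rfl⟩ := t.eq_nat_or_neg <;> simp [← inv_pow]

def IsFibonacciRec {G : Type*} [Add G] (f : ℤ → G) : Prop :=
  ∀ m, f m = f (m - 1) + f (m - 2)

lemma IsFibonacciRec.ext {G : Type*} [AddCommGroup G] {f g : ℤ → G} (hf : IsFibonacciRec f)
    (hg : IsFibonacciRec g) (h0 : f 0 = g 0) (h1 : f 1 = g 1) : f = g := by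
  suffices h : ∀ m : ℤ, f m = g m ∧ f (m + 1) = g (m + 1) from funext fun m => (h m).1
  intro m
  induction m using Int.induction_on with
  | zero => exact ⟨h0, by simpa using h1⟩
  | succ i ih =>
    refine ⟨ih.2, ?_⟩
    rw [hf, hg, add_sub_cancel_right, show (i : ℤ) + 1 + 1 - 2 = i by ring, ih.1, ih.2]
  | pred i ih =>
    refine ⟨?_, by simpa using ih.1⟩
    have hfi := hf (-i + 1)
    have hgi := hg (-i + 1)
    rw [show -(i : ℤ) + 1 - 2 = -i - 1 by ring, add_sub_cancel_right] at hfi hgi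
    rw [eq_sub_of_add_eq' hfi.symm, eq_sub_of_add_eq' hgi.symm, ih.1, ih.2]

lemma zpow_eq_zpow_sub_one_add_zpow_sub_two {K : Type*} [DivisionRing K] {x : K}
    (hx : x ^ 2 = x + 1) (m : ℤ) : x ^ m = x ^ (m - 1) + x ^ (m - 2) := by
  have hx0 : x ≠ 0 := by rintro rfl; simp at hx
  rw [show m = m - 2 + 2 by ring, zpow_add₀ hx0, zpow_ofNat, hx,
    show m - 2 + 2 - 1 = m - 2 + 1 by ring, zpow_add_one₀ hx0, add_sub_cancel_right, mul_add,
    mul_one]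

lemma IsFibonacciRec.sqrt_five_mul_eq_goldenRatio_zpow_sub {F : ℤ → ℤ} (hF : IsFibonacciRec F)
    (h0 : F 0 = 0) (h1 : F 1 = 1) (m : ℤ) : √5 * (F m : ℝ) = φ ^ m - ψ ^ m := by
  refine congrFun (IsFibonacciRec.ext (f := fun m => √5 * (F m : ℝ))
    (g := fun m => φ ^ m - ψ ^ m) (fun m => ?_) (fun m => ?_) ?_ ?_) m
  · dsimp only
    rw [hF m]
    push_cast
    ring
  · dsimp only
    rw [zpow_eq_zpow_sub_one_add_zpow_sub_two goldenRatio_sq m,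
      zpow_eq_zpow_sub_one_add_zpow_sub_two goldenConj_sq m]
    ring
  · simp [h0]
  · simp [h1]

lemma IsFibonacciRec.cast_eq_goldenRatio_zpow_add {L : ℤ → ℤ} (hL : IsFibonacciRec L)
    (h0 : L 0 = 2) (h1 : L 1 = 1) (m : ℤ) : (L m : ℝ) = φ ^ m + ψ ^ m := by
  refine congrFun (IsFibonacciRec.ext (f := fun m => (L m : ℝ))
    (g := fun m => φ ^ m + ψ ^ m) (fun m => ?_) (fun m => ?_) ?_ ?_) m
  · dsimp only
    rw [hL m]
    push_cast
    ring
  · dsimp only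
    rw [zpow_eq_zpow_sub_one_add_zpow_sub_two goldenRatio_sq m,
      zpow_eq_zpow_sub_one_add_zpow_sub_two goldenConj_sq m]
    ring
  · simp [h0, one_add_one_eq_two]
  · simp [h1]

theorem stmt17 (F : ℤ → ℤ) (hF0 : F 0 = 0) (hF1 : F 1 = 1)
    (hF : ∀ j : ℤ, F j = F (j - 1) + F (j - 2)) (L : ℤ → ℤ) (hL0 : L 0 = 2) (hL1 : L 1 = 1)
    (hL : ∀ j : ℤ, L j = L (j - 1) + L (j - 2)) (n : ℕ) (hn : 0 < n) (r s j : ℤ) :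
    10 * ∑ k ∈ Finset.range (n + 1),
        ((2 * n).choose (2 * k) : ℤ) * F (j * (2 * (k : ℤ) + r)) * F (j * (2 * (k : ℤ) + s))
      = (L j ^ (2 * n) + 5 ^ n * F j ^ (2 * n)) * L (j * (2 * (n : ℤ) + r + s))
        - (-1 : ℤ) ^ (j * s).natAbs * 4 ^ n * L (j * (r - s)) := by
  have hF_binet := IsFibonacciRec.sqrt_five_mul_eq_goldenRatio_zpow_sub hF hF0 hF1
  have hL_binet := IsFibonacciRec.cast_eq_goldenRatio_zpow_add hL hL0 hL1
  have hαβ : φ ^ j * ψ ^ j = (-1) ^ j := by rw [← mul_zpow, goldenRatio_mul_goldenConj]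
  have hαβ_sq : (φ ^ j * ψ ^ j) ^ 2 = 1 := by
    rw [hαβ, ← zpow_natCast, ← zpow_mul, mul_comm, zpow_mul]
    norm_num
  have key := two_mul_sq_mul_sum_choose_mul_binet (d := √5) (f := fun m => (F (j * m) : ℝ))
    (l := fun m => (L (j * m) : ℝ)) hαβ_sq (fun m => by rw [hF_binet, zpow_mul, zpow_mul])
    (fun m => by rw [hL_binet, zpow_mul, zpow_mul]) hn r s
  simp only [mul_one, Real.sq_sqrt (by norm_num : (0 : ℝ) ≤ 5)] at key
  rw [hαβ, ← zpow_mul, neg_one_zpow_eq_pow_natAbs] at key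
  apply Int.cast_injective (α := ℝ)
  push_cast
  linear_combination key
end
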